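/- arXiv:2212.12171 — 9 statements merged into one kernel-verified Lean document; each statement's English description precedes it below -/
import Mathlib

section
/- An order ≺ on {1,...,n} is a unit interval order (i.e., arises from n unit intervals I_1,...,I_n numbered left to right with i ≺ j iff I_i lies strictly to the left of I_j) if and only if for all x, y: (1) x ≺ y implies x < y, and (2) x ≺ y implies x' ≺ y' for all x' ≤ x and y' ≥ y. -/
/-!
The forward direction is immediate from monotonicity of the left endpoints. Conversely, place
the points one at a time from left to right, keeping the invariant that no right endpoint
`f i + 1` coincides with a left endpoint `f j`. The new point `c` must lie to the right of every
`f i`, to the right of `f i + 1` when `i ≺ new`, and to the left of `f j + 1` when not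
`j ≺ new`. The two axioms and the invariant put these finitely many lower bounds strictly below
the upper bounds, so such a `c` exists by density.
-/

/-- A unit interval order on `Fin n`: `x ≺ y` implies `x < y`, and
`x ≺ y` implies `x' ≺ y'` for all `x' ≤ x` and `y' ≥ y`. -/
def IsUIO {n : ℕ} (r : Fin n → Fin n → Prop) : Prop :=
  (∀ x y, r x y → x < y) ∧
  (∀ x y, r x y → ∀ x' y', x' ≤ x → y ≤ y' → r x' y')

lemma isUIO_of_monotone {n : ℕ} {f : Fin n → ℝ} (hf : Monotone f) :
    IsUIO fun i j => f i + 1 < f j := by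
  refine ⟨fun _ _ hxy => ?_, fun _ _ hxy _ _ hx hy => ?_⟩
  · by_contra! hyx
    linarith [hf hyx]
  · linarith [hf hx, hf hy]

lemma IsUIO.castSucc {n : ℕ} {r : Fin (n + 1) → Fin (n + 1) → Prop} (h : IsUIO r) :
    IsUIO fun i j : Fin n => r i.castSucc j.castSucc :=
  ⟨fun _ _ hxy => Fin.castSucc_lt_castSucc_iff.mp (h.1 _ _ hxy),
    fun _ _ hxy _ _ hx hy =>
      h.2 _ _ hxy _ _ (Fin.castSucc_le_castSucc_iff.mpr hx) (Fin.castSucc_le_castSucc_iff.mpr hy)⟩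

def IsStrictUnitRep {α : Type*} (r : α → α → Prop) (f : α → ℝ) : Prop :=
  ∀ i j, (r i j → f i + 1 < f j) ∧ (¬ r i j → f j < f i + 1)

lemma IsStrictUnitRep.iff {α : Type*} {r : α → α → Prop} {f : α → ℝ}
    (hf : IsStrictUnitRep r f) (i j : α) : r i j ↔ f i + 1 < f j :=
  ⟨(hf i j).1, fun hlt => by_contra fun hr => ((hf i j).2 hr).asymm hlt⟩

lemma Fin.strictMono_snoc {α : Type*} [Preorder α] {n : ℕ} {f : Fin n → α} (hf : StrictMono f)
    {c : α} (hc : ∀ i, f i < c) : StrictMono (Fin.snoc (α := fun _ => α) f c) := by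
  intro i j hij
  induction j using Fin.lastCases with
  | last =>
    obtain ⟨i, rfl⟩ := Fin.exists_castSucc_eq.mpr hij.ne
    simpa using hc i
  | cast j =>
    obtain ⟨i, rfl⟩ := Fin.exists_castSucc_eq.mpr (hij.trans (Fin.castSucc_lt_last j)).ne
    simpa using hf (Fin.castSucc_lt_castSucc_iff.mp hij)

section Extension

variable {n : ℕ} {r : Fin (n + 1) → Fin (n + 1) → Prop} {f : Fin n → ℝ}

lemma IsUIO.exists_last_endpoint (h : IsUIO r) (hf : StrictMono f)
    (hrep : IsStrictUnitRep (fun i j : Fin n => r i.castSucc j.castSucc) f) :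
    ∃ c, (∀ i, f i < c) ∧ ∀ i,
      (r i.castSucc (Fin.last n) → f i + 1 < c) ∧ (¬ r i.castSucc (Fin.last n) → c < f i + 1) := by
  set P : Fin n → Prop := fun i => r i.castSucc (Fin.last n)
  have hP_lt : ∀ i j, P i → ¬ P j → i < j := fun i j hi hj => by
    by_contra! hji
    exact hj (h.2 _ _ hi _ _ (Fin.castSucc_le_castSucc_iff.mpr hji) le_rfl)
  have hf_lt : ∀ i j, ¬ P j → f i < f j + 1 := fun i j hj => by
    rcases le_or_gt i j with hij | hji
    · linarith [hf.monotone hij]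
    · exact (hrep j i).2 fun hr => hj (h.2 _ _ hr _ _ le_rfl (Fin.le_last _))
  obtain ⟨c, hlower, hupper⟩ := Set.Finite.exists_between'
    (s := Set.range f ∪ (fun i => f i + 1) '' {i | P i})
    (t := (fun j => f j + 1) '' {j | ¬ P j}) (Set.toFinite _) (Set.toFinite _) <| by
      rintro _ (⟨i, rfl⟩ | ⟨i, hi, rfl⟩) _ ⟨j, hj, rfl⟩
      · exact hf_lt i j hj
      · linarith [hf (hP_lt i j hi hj)]
  exact ⟨c, fun i => hlower _ (Or.inl ⟨i, rfl⟩),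
    fun i => ⟨fun hi => hlower _ (Or.inr ⟨i, hi, rfl⟩), fun hi => hupper _ ⟨i, hi, rfl⟩⟩⟩

lemma IsUIO.exists_snoc (h : IsUIO r) (hf : StrictMono f)
    (hrep : IsStrictUnitRep (fun i j : Fin n => r i.castSucc j.castSucc) f) :
    ∃ c, StrictMono (Fin.snoc (α := fun _ => ℝ) f c) ∧
      IsStrictUnitRep r (Fin.snoc (α := fun _ => ℝ) f c) := by
  obtain ⟨c, hfc, hc⟩ := h.exists_last_endpoint hf hrep
  have hlast_not : ∀ j, ¬ r (Fin.last n) j := fun j hr =>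
    (Fin.le_last j).not_gt (h.1 _ _ hr)
  refine ⟨c, Fin.strictMono_snoc hf hfc, fun i j => ?_⟩
  induction i using Fin.lastCases with
  | last =>
    refine ⟨fun hr => (hlast_not j hr).elim, fun _ => ?_⟩
    induction j using Fin.lastCases with
    | last => simp
    | cast j => simpa using (hfc j).trans (lt_add_one c)
  | cast i =>
    induction j using Fin.lastCases with
    | last => simpa using hc i
    | cast j => simpa using hrep i j

end Extension

theorem IsUIO.exists_strictMono_isStrictUnitRep {n : ℕ} {r : Fin n → Fin n → Prop}
    (h : IsUIO r) : ∃ f : Fin n → ℝ, StrictMono f ∧ IsStrictUnitRep r f := by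
  induction n with
  | zero => exact ⟨Fin.elim0, fun i => i.elim0, fun i => i.elim0⟩
  | succ n ih =>
    obtain ⟨f, hf, hrep⟩ := ih h.castSucc
    obtain ⟨c, hmono, hrep'⟩ := h.exists_snoc hf hrep
    exact ⟨_, hmono, hrep'⟩

/-- An order on `{1,…,n}` is a unit interval order — i.e. arises
from `n` unit intervals numbered left to right (monotone left endpoints `f`),
with `i ≺ j` iff `I i` lies strictly to the left of `I j` (`f i + 1 < f j`) —
if and only if it satisfies the two combinatorial properties. -/
theorem unit_interval_order_iff {n : ℕ} (r : Fin n → Fin n → Prop) :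
    (∃ f : Fin n → ℝ, Monotone f ∧ ∀ i j, r i j ↔ f i + 1 < f j) ↔ IsUIO r := by
  constructor
  · rintro ⟨f, hf, hr⟩
    obtain rfl : r = fun i j => f i + 1 < f j := funext₂ fun i j => propext (hr i j)
    exact isUIO_of_monotone hf
  · intro h
    obtain ⟨f, hf, hrep⟩ := h.exists_strictMono_isStrictUnitRep
    exact ⟨f, hf.monotone, hrep.iff⟩
end

section
/- The map sending a unit interval order U on {1,...,n} to the set {(x,y) : x < y, x ⊀ y} is a bijection from unit interval orders on {1,...,n} to area sets of Dyck paths of length n. -/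
/-- An area set of a Dyck path of length `n`: a set of pairs `(i,j)` with `i < j`,
closed under moving weakly toward the diagonal. -/
def IsAreaSet {n : ℕ} (A : Set (Fin n × Fin n)) : Prop :=
  ∀ p ∈ A, p.1 < p.2 ∧
    ∀ x' y' : Fin n, p.1 ≤ x' → x' < y' → y' ≤ p.2 → (x', y') ∈ A

/-- The map sending a unit interval order to its set of
incomparable pairs `{(x,y) : x < y, x ⊀ y}` is a bijection from unit interval
orders on `{1,…,n}` to area sets of Dyck paths of length `n`. -/
theorem uio_areaSet_bijection (n : ℕ) :
    Set.BijOn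
      (fun r : Fin n → Fin n → Prop =>
        {p : Fin n × Fin n | p.1 < p.2 ∧ ¬ r p.1 p.2})
      {r | IsUIO r} {A | IsAreaSet A} := by
  refine ⟨?_, ?_, ?_⟩
  · intro r hr p hp
    exact ⟨hp.1, fun x' y' hx hxy hy => ⟨hxy, fun hr' => hp.2 (hr.2 x' y' hr' p.1 p.2 hx hy)⟩⟩
  · intro r hr s hs h
    simp only [Set.ext_iff, Set.mem_setOf_eq] at h
    funext x y
    apply propext
    constructor
    · intro hrxy
      have hlt := hr.1 x y hrxy
      by_contra hs'
      exact ((h (x, y)).mpr ⟨hlt, hs'⟩).2 hrxy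
    · intro hsxy
      have hlt := hs.1 x y hsxy
      by_contra hr'
      exact ((h (x, y)).mp ⟨hlt, hr'⟩).2 hsxy
  · intro A hA
    refine ⟨fun x y => x < y ∧ (x, y) ∉ A, ⟨fun x y h => h.1, ?_⟩, ?_⟩
    · rintro x y ⟨hxy, hnA⟩ x' y' hx hy
      refine ⟨lt_of_le_of_lt hx (lt_of_lt_of_le hxy hy), fun hmem => ?_⟩
      exact hnA ((hA _ hmem).2 x y hx hxy hy)
    · ext ⟨x, y⟩
      simp only [Set.mem_setOf_eq, not_and, not_not]
      constructor
      · rintro ⟨hlt, h⟩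
        exact h hlt
      · intro hmem
        exact ⟨(hA _ hmem).1, fun _ => hmem⟩
end

section
/- Given an area set A of a Dyck path of length n (a down-closed set of pairs above the diagonal), the relation x ≺ y defined by x < y and (x,y) ∉ A is a unit interval order on {1,...,n}. -/
/-- Given an area set `A` of a Dyck path of length `n`, the
relation `x ≺ y` iff `x < y` and `(x,y) ∉ A` is a unit interval order. -/
theorem areaSet_gives_uio {n : ℕ} (A : Set (Fin n × Fin n)) (hA : IsAreaSet A) :
    IsUIO (fun x y : Fin n => x < y ∧ (x, y) ∉ A) := by
  refine ⟨fun x y h => h.1, fun x y h x' y' hx hy => ?_⟩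
  have hxy' : x' < y' := lt_of_le_of_lt hx (lt_of_lt_of_le h.1 hy)
  exact ⟨hxy', fun hmem => h.2 ((hA _ hmem).2 x y hx h.1 hy)⟩
end

section
/- For any part listing w of length n, the poset P(w) defined by i ≺ j iff (w_j − w_i ≥ 2) or (w_j − w_i = 1 and i < j) is isomorphic to a unit interval order; i.e., there is a relabeling of {1,...,n} under which the order satisfies: x ≺ y implies x < y, and x ≺ y implies x' ≺ y' for all x' ≤ x, y' ≥ y. -/
/-- The poset `P(w)` of a part listing `w`: `i ≺ j` iff `w j − w i ≥ 2`,
or `w j − w i = 1` and `i < j`. -/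
def Prel {n : ℕ} (w : Fin n → ℕ) (i j : Fin n) : Prop :=
  w i + 2 ≤ w j ∨ (w j = w i + 1 ∧ i < j)

private lemma key_lt {n : ℕ} (w : Fin n → ℕ) {a b : Fin n} (h : w a < w b) :
    w a * n + a.val < w b * n + b.val := by
  calc w a * n + a.val < w a * n + n := by omega
    _ = (w a + 1) * n := by ring
    _ ≤ w b * n := Nat.mul_le_mul_right n h
    _ ≤ w b * n + b.val := Nat.le_add_right _ _

private lemma key_le {n : ℕ} (w : Fin n → ℕ) {a b : Fin n}
    (h : w a * n + a.val ≤ w b * n + b.val) : w a ≤ w b := by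
  by_contra hc
  exact absurd h (not_le.mpr (key_lt w (by omega)))

/-- For any part listing `w`, the poset `P(w)` is isomorphic to
a unit interval order: there is a relabeling `e` of `{1,…,n}` under which the
transported order satisfies the two unit-interval-order properties. -/
theorem prel_iso_uio {n : ℕ} (w : Fin n → ℕ) :
    ∃ e : Fin n ≃ Fin n, IsUIO (fun i j : Fin n => Prel w (e i) (e j)) := by
  set f : Fin n → ℕ := fun i => w i * n + i.val with hf
  refine ⟨Tuple.sort f, ?_, ?_⟩
  · intro x y hxy
    by_contra hc
    have hle : f (Tuple.sort f y) ≤ f (Tuple.sort f x) :=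
      Tuple.monotone_sort f (not_lt.mp hc)
    have hw : w (Tuple.sort f y) ≤ w (Tuple.sort f x) := key_le w hle
    rcases hxy with h | ⟨h, _⟩ <;> omega
  · intro x y hxy x' y' hx' hy'
    have h1 : f (Tuple.sort f x') ≤ f (Tuple.sort f x) := Tuple.monotone_sort f hx'
    have h2 : f (Tuple.sort f y) ≤ f (Tuple.sort f y') := Tuple.monotone_sort f hy'
    set a := Tuple.sort f x; set b := Tuple.sort f y
    set a' := Tuple.sort f x'; set b' := Tuple.sort f y'
    have hwa : w a' ≤ w a := key_le w h1
    have hwb : w b ≤ w b' := key_le w h2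
    rcases hxy with h | ⟨h, hab⟩
    · exact Or.inl (by omega)
    · by_cases hc : w a' + 2 ≤ w b'
      · exact Or.inl hc
      · have hwa' : w a' = w a := by omega
        have hwb' : w b' = w b := by omega
        refine Or.inr ⟨by omega, ?_⟩
        have ha : a'.val ≤ a.val := by simp only [hf, hwa'] at h1; omega
        have hb : b.val ≤ b'.val := by simp only [hf, hwb'] at h2; omega
        have : a.val < b.val := hab
        exact Fin.lt_def.mpr (by omega)
end

section
/- For any unit interval order U on {1,...,n}, the word q(U) produced by the insertion algorithm is the area sequence of a Dyck path: its first entry is 0 and each entry is at most one more than the preceding entry. -/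
/-- The level function: `ℓ j = 0` if `j` is minimal, else `1 + max {ℓ i : i ≺ j}`
(for a unit interval order, `i ≺ j` implies `i < j`). -/
def level {n : ℕ} (r : Fin n → Fin n → Prop) [DecidableRel r] : Fin n → ℕ
  | j =>
    ((Finset.univ.filter (fun i => r i j ∧ i < j)).attach).sup
      (fun i => level r i.1 + 1)
termination_by j => j.val
decreasing_by
  exact (Finset.mem_filter.mp i.2).2.2

/-- `C i`: the number of elements of level `ℓ(i) − 1` comparable to `i`. -/
def comparCount {n : ℕ} (r : Fin n → Fin n → Prop) [DecidableRel r] (i : Fin n) : ℕ :=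
  (Finset.univ.filter (fun j => level r j + 1 = level r i ∧ (r j i ∨ r i j))).card

/-- Position directly after the `k`-th occurrence of `v` in a list (`0` if `k = 0`). -/
def afterKth : List ℕ → ℕ → ℕ → ℕ
  | _, _, 0 => 0
  | [], _, _ + 1 => 0
  | x :: xs, v, k + 1 =>
    if x = v then
      if k = 0 then 1 else 1 + afterKth xs v k
    else 1 + afterKth xs v (k + 1)

/-- Starting from position `p`, skip the occurrences of the letter `l`. -/
def skipRun (q : List ℕ) (l p : ℕ) : ℕ :=
  p + ((q.drop p).takeWhile (fun x => x = l)).length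

/-- The insertion algorithm: insert `ℓ(i)` directly after the occurrences of `ℓ(i)`
immediately following the `C_i`-th letter `ℓ(i) − 1`. -/
def buildQ {n : ℕ} (r : Fin n → Fin n → Prop) [DecidableRel r] : ℕ → List ℕ
  | 0 => []
  | i + 1 =>
    let q := buildQ r i
    if h : i < n then
      let l := level r ⟨i, h⟩
      q.insertIdx (skipRun q l (afterKth q (l - 1) (comparCount r ⟨i, h⟩))) l
    else q

/-- The part listing `q(U)` produced by the insertion algorithm. -/
def qList {n : ℕ} (r : Fin n → Fin n → Prop) [DecidableRel r] : List ℕ :=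
  buildQ r n

theorem List.insertIdx_length_append {α : Type*} (A B : List α) (x : α) :
    (A ++ B).insertIdx A.length x = A ++ x :: B := by
  induction A with
  | nil => simp
  | cons a A ih => simpa using ih

theorem afterKth_zero (q : List ℕ) (v : ℕ) : afterKth q v 0 = 0 := by
  rw [afterKth]

theorem afterKth_le_length (q : List ℕ) (v k : ℕ) : afterKth q v k ≤ q.length := by
  induction q generalizing k with
  | nil => cases k <;> simp [afterKth]
  | cons x xs ih =>
    cases k with
    | zero => simp [afterKth]
    | succ k =>
      have := ih k
      have := ih (k + 1)
      rw [afterKth]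
      split_ifs <;> simp <;> omega

theorem getLast?_take_afterKth {q : List ℕ} {v k : ℕ} (hk : k ≠ 0) (hc : k ≤ q.count v) :
    (q.take (afterKth q v k)).getLast? = some v := by
  induction q generalizing k with
  | nil => simp at hc; omega
  | cons x xs ih =>
    obtain ⟨k, rfl⟩ := Nat.exists_eq_succ_of_ne_zero hk
    rw [afterKth]
    by_cases hx : x = v
    · subst hx
      by_cases hk0 : k = 0
      · simp [hk0]
      · rw [List.count_cons_self] at hc
        simp [hk0, Nat.add_comm 1, List.getLast?_cons, ih hk0 (by omega)]
    · rw [List.count_cons_of_ne hx] at hc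
      simp [hx, Nat.add_comm 1, List.getLast?_cons, ih hk hc]

theorem skipRun_le_length (q : List ℕ) (l : ℕ) {p : ℕ} (hp : p ≤ q.length) :
    skipRun q l p ≤ q.length := by
  have := (List.takeWhile_prefix (fun x => decide (x = l)) (l := q.drop p)).length_le
  rw [List.length_drop] at this
  unfold skipRun
  omega

theorem insertIdx_skipRun_eq (q : List ℕ) (l x : ℕ) {p : ℕ} (hp : p ≤ q.length) :
    q.insertIdx (skipRun q l p) x =
      (q.take p ++ (q.drop p).takeWhile (fun y => y = l)) ++
        x :: (q.drop p).dropWhile (fun y => y = l) := by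
  have hsplit : q = (q.take p ++ (q.drop p).takeWhile (fun y => y = l)) ++
      (q.drop p).dropWhile (fun y => y = l) := by
    rw [List.append_assoc, List.takeWhile_append_dropWhile, List.take_append_drop]
  have hlen : skipRun q l p =
      (q.take p ++ (q.drop p).takeWhile (fun y => y = l)).length := by
    simp [skipRun, hp]
  rw [hlen, ← List.insertIdx_length_append, ← hsplit]

def IsAreaSeq (q : List ℕ) : Prop :=
  (∀ x ∈ q.head?, x = 0) ∧ q.IsChain (fun a b => b ≤ a + 1)

theorem IsAreaSeq.insert_append {A D : List ℕ} {l : ℕ} (hs : IsAreaSeq (A ++ D))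
    (hnil : A = [] → l = 0) (hlast : ∀ a ∈ A.getLast?, a ≤ l ∧ l ≤ a + 1) :
    IsAreaSeq (A ++ l :: D) := by
  obtain ⟨hhead, hchain⟩ := hs
  rw [List.isChain_append] at hchain
  obtain ⟨hA, hD, hAD⟩ := hchain
  have hl_head : ∀ d ∈ D.head?, d ≤ l + 1 := by
    intro d hd
    cases hA' : A.getLast? with
    | none =>
      obtain rfl := List.getLast?_eq_none_iff.mp hA'
      have := hhead d (by simpa using hd)
      omega
    | some a =>
      have := hAD a hA' d hd
      have := hlast a hA'
      omega
  refine ⟨?_, List.isChain_append.mpr ⟨hA, List.isChain_cons.mpr ⟨hl_head, hD⟩, ?_⟩⟩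
  · cases A with
    | nil => simpa using hnil rfl
    | cons a A => simpa using hhead
  · simp only [List.head?_cons, Option.mem_def, Option.some.injEq]
    rintro a ha _ rfl
    exact (hlast a ha).2

theorem IsAreaSeq.insertIdx_skipRun {q : List ℕ} {l p : ℕ} (hs : IsAreaSeq q)
    (hp : p ≤ q.length) (hnil : p = 0 → l = 0)
    (hlast : ∀ a ∈ (q.take p).getLast?, a ≤ l ∧ l ≤ a + 1) :
    IsAreaSeq (q.insertIdx (skipRun q l p) l) := by
  rw [insertIdx_skipRun_eq q l l hp]
  refine IsAreaSeq.insert_append ?_ ?_ ?_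
  · rwa [List.append_assoc, List.takeWhile_append_dropWhile, List.take_append_drop]
  · intro hA
    rcases List.take_eq_nil_iff.mp (List.append_eq_nil_iff.mp hA).1 with hp0 | rfl
    · exact hnil hp0
    · exact hnil (Nat.le_zero.mp hp)
  · intro a ha
    rw [List.getLast?_append] at ha
    cases hT : ((q.drop p).takeWhile (fun y => y = l)).getLast? with
    | none => simp only [hT, Option.none_or] at ha; exact hlast a ha
    | some b =>
      simp only [hT, Option.some_or, Option.mem_def, Option.some.injEq] at ha
      subst ha
      have := List.mem_takeWhile_imp (List.mem_of_getLast? hT)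
      simp only [decide_eq_true_eq] at this
      omega

def insertLetter (q : List ℕ) (l k : ℕ) : List ℕ :=
  q.insertIdx (skipRun q l (afterKth q (l - 1) k)) l

theorem perm_insertLetter (q : List ℕ) (l k : ℕ) : (insertLetter q l k).Perm (l :: q) :=
  List.perm_insertIdx l q (skipRun_le_length q l (afterKth_le_length q _ k))

theorem IsAreaSeq.insertLetter {q : List ℕ} {l k : ℕ} (hs : IsAreaSeq q)
    (hk : k = 0 → l = 0) (hc : k ≤ q.count (l - 1)) : IsAreaSeq (insertLetter q l k) := by
  refine hs.insertIdx_skipRun (afterKth_le_length q _ k) ?_ ?_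
  · rcases eq_or_ne k 0 with rfl | hk0
    · exact fun _ => hk rfl
    · intro hp
      simpa [hp] using getLast?_take_afterKth hk0 hc
  · rcases eq_or_ne k 0 with rfl | hk0
    · simp [afterKth_zero]
    · rw [getLast?_take_afterKth hk0 hc]
      simp only [Option.mem_def, Option.some.injEq]
      omega

section Levels

open Finset

variable {n : ℕ} (r : Fin n → Fin n → Prop) [DecidableRel r]

theorem level_add_one_le_of_rel {i j : Fin n} (hr : r i j) (hij : i < j) :
    level r i + 1 ≤ level r j := by
  rw [level.eq_1 r j]
  have hmem : i ∈ ({x | r x j ∧ x < j} : Finset (Fin n)) := by simp [hr, hij]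
  exact le_sup (f := fun x => level r x.1 + 1) (mem_attach _ ⟨i, hmem⟩)

theorem exists_rel_level_add_one {j : Fin n} (h : level r j ≠ 0) :
    ∃ i, r i j ∧ level r i + 1 = level r j := by
  rw [level.eq_1 r j] at h ⊢
  set s := ({x | r x j ∧ x < j} : Finset (Fin n)).attach
  obtain ⟨i, -, hi⟩ := s.exists_mem_eq_sup
    (nonempty_iff_ne_empty.mpr fun he => h (by rw [he]; rfl)) (fun i => level r i.1 + 1)
  exact ⟨i.1, (mem_filter.mp i.2).2.1, hi.symm⟩

theorem buildQ_succ (i : ℕ) (h : i < n) :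
    buildQ r (i + 1) = insertLetter (buildQ r i) (level r ⟨i, h⟩) (comparCount r ⟨i, h⟩) := by
  simp [buildQ, h, insertLetter]

theorem count_buildQ {i : ℕ} (hi : i ≤ n) (m : ℕ) :
    (buildQ r i).count m = #{j : Fin n | j.val < i ∧ level r j = m} := by
  induction i with
  | zero => simp [buildQ]
  | succ i ih =>
    have h : i < n := hi
    have hcard : #{j : Fin n | j.val < i + 1 ∧ level r j = m} =
        #{j : Fin n | j.val < i ∧ level r j = m} + if level r ⟨i, h⟩ = m then 1 else 0 := by
      have hlast : ∀ j : Fin n, j.val < i + 1 ↔ j.val < i ∨ j = ⟨i, h⟩ := fun j => by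
        simp only [Fin.ext_iff]; omega
      split_ifs with hm
      · rw [← card_insert_of_notMem (a := ⟨i, h⟩) (by simp)]
        congr 1
        ext j
        grind
      · rw [add_zero]
        congr 1
        ext j
        grind
    rw [buildQ_succ r i h, (perm_insertLetter _ _ _).count_eq, List.count_cons, ih h.le, hcard]
    simp

theorem comparCount_ne_zero {i : Fin n} (h : level r i ≠ 0) : comparCount r i ≠ 0 := by
  obtain ⟨j, hji, hj⟩ := exists_rel_level_add_one r h
  exact card_ne_zero.mpr ⟨j, mem_filter.mpr ⟨mem_univ j, hj, Or.inl hji⟩⟩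

theorem comparCount_le_count_buildQ (hlt : ∀ x y, r x y → x < y) (i : Fin n) :
    comparCount r i ≤ (buildQ r i).count (level r i - 1) := by
  rw [count_buildQ r i.is_lt.le]
  refine card_le_card fun j hj => ?_
  simp only [mem_filter, mem_univ, true_and] at hj ⊢
  obtain ⟨hlevel, hji | hij⟩ := hj
  · exact ⟨hlt j i hji, by omega⟩
  · have := level_add_one_le_of_rel r hij (hlt i j hij)
    omega

theorem isAreaSeq_buildQ (hlt : ∀ x y, r x y → x < y) {i : ℕ} (hi : i ≤ n) :
    IsAreaSeq (buildQ r i) := by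
  induction i with
  | zero => simp [buildQ, IsAreaSeq]
  | succ i ih =>
    have h : i < n := hi
    rw [buildQ_succ r i h]
    exact (ih h.le).insertLetter (not_imp_not.mp (comparCount_ne_zero r))
      (comparCount_le_count_buildQ r hlt ⟨i, h⟩)

end Levels

theorem IsAreaSeq.getD_zero_and_succ_le {q : List ℕ} (hq : IsAreaSeq q) :
    q.getD 0 0 = 0 ∧ ∀ i : ℕ, i + 1 < q.length → q.getD (i + 1) 0 ≤ q.getD i 0 + 1 := by
  obtain ⟨hhead, hchain⟩ := hq
  refine ⟨?_, fun i hi => ?_⟩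
  · cases q with
    | nil => rfl
    | cons a q => simpa using hhead
  · rw [List.getD_eq_getElem _ _ hi, List.getD_eq_getElem _ _ (by omega)]
    exact List.isChain_iff_getElem.mp hchain i hi

/-- For any unit interval order `U`, the word `q(U)` produced by
the insertion algorithm is the area sequence of a Dyck path: its first entry is
`0` and each entry is at most one more than the preceding entry. -/
theorem qList_isAreaSeq {n : ℕ} (r : Fin n → Fin n → Prop) [DecidableRel r]
    (h : IsUIO r) :
    (qList r).getD 0 0 = 0 ∧
    ∀ i : ℕ, i + 1 < (qList r).length →
      (qList r).getD (i + 1) 0 ≤ (qList r).getD i 0 + 1 :=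
  (isAreaSeq_buildQ r h.1 le_rfl).getD_zero_and_succ_le
end

section
/- The zeta map sends Dyck paths to Dyck paths: for any Dyck path D of length n, the lattice path ζ(D) obtained by reading the labels of D along lines of slope 1 stays weakly above the diagonal. -/
/-- Each step of a path (`true` = up, `false` = right) together with the height
`y − x` of the line of slope 1 containing its label. -/
def labelHeights : List Bool → ℤ → List (Bool × ℤ)
  | [], _ => []
  | b :: rest, h =>
    let h' := if b then h + 1 else h - 1
    (b, h') :: labelHeights rest h'

/-- Haglund's zeta map: read the labels along the lines `y = x + t` for
`t = 0, 1, 2, …`, turning the label of a right step into an up step and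
the label of an up step into a right step. -/
def zeta (D : List Bool) : List Bool :=
  (List.range (D.length + 1)).flatMap fun t =>
    ((labelHeights D 0).filter (fun p => p.2 = (t : ℤ))).map fun p => !p.1

/-- A Dyck path: a lattice path from `(0,0)` to `(n,n)` (`true` = up, `false` = right)
staying weakly above the diagonal. -/
def IsDyck (D : List Bool) : Prop :=
  D.count true = D.count false ∧
  ∀ k, (D.take k).count false ≤ (D.take k).count true

/-!
Let `U t` (resp. `R t`) be the number of up (resp. right) labels of `D` on the line `y = x + t`.
Since `D` returns to the diagonal, it crosses each line `y = x + t + 1/2` upwards as often as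
downwards, i.e. `U (t + 1) = R t`. The block of `ζ(D)` read on the line `t` consists of `R t` up
steps and `U t` right steps, so its height is `U (t + 1) - U t` and the blocks telescope: `ζ(D)`
is at height `U t - U 0` before reading line `t`, and inside that block it drops by at most `U t`.
As `D` stays weakly above the diagonal, `U 0 = 0`; as all labels lie on lines `t ≤ n`,
`U (n + 1) = 0`.
-/

namespace LatticePath

open List

def height (l : List Bool) : ℤ := (l.count true : ℤ) - l.count false

@[simp] lemma height_nil : height [] = 0 := by simp [height]

lemma height_cons (b : Bool) (l : List Bool) :
    height (b :: l) = (if b then 1 else -1) + height l := by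
  cases b <;> simp [height] <;> ring

lemma height_append (l₁ l₂ : List Bool) : height (l₁ ++ l₂) = height l₁ + height l₂ := by
  simp only [height, count_append]; push_cast; ring

lemma neg_count_false_le_height_take (l : List Bool) (k : ℕ) :
    -(l.count false : ℤ) ≤ height (l.take k) := by
  have : (l.take k).count false ≤ l.count false := (l.take_sublist k).count_le _
  simp only [height]
  omega

lemma isDyck_iff (D : List Bool) :
    IsDyck D ↔ height D = 0 ∧ ∀ k, 0 ≤ height (D.take k) := by
  simp only [IsDyck, height, sub_eq_zero, sub_nonneg, Nat.cast_inj, Nat.cast_le]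

lemma height_take_append_nonneg {l₁ l₂ : List Bool} (h₁ : ∀ k, 0 ≤ height (l₁.take k))
    (h₂ : ∀ k, 0 ≤ height l₁ + height (l₂.take k)) (k : ℕ) :
    0 ≤ height ((l₁ ++ l₂).take k) := by
  rw [take_append, height_append]
  by_cases hk : k ≤ l₁.length
  · simpa [Nat.sub_eq_zero_of_le hk] using h₁ k
  · rw [take_of_length_le (by omega)]
    exact h₂ _

section Telescoping

variable {f : ℕ → List Bool} {u : ℕ → ℤ}

lemma height_flatMap_range (hf : ∀ t, height (f t) = u (t + 1) - u t) (m : ℕ) :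
    height ((range m).flatMap f) = u m - u 0 := by
  induction m with
  | zero => simp
  | succ m ih => rw [range_succ, flatMap_append, height_append, ih]; simp [hf]

lemma height_take_flatMap_range_nonneg (hu : u 0 = 0)
    (hf : ∀ t, height (f t) = u (t + 1) - u t) (hfu : ∀ t k, 0 ≤ u t + height ((f t).take k))
    (m k : ℕ) : 0 ≤ height (((range m).flatMap f).take k) := by
  induction m generalizing k with
  | zero => simp
  | succ m ih =>
    rw [range_succ, flatMap_append, flatMap_singleton]
    refine height_take_append_nonneg ih (fun k ↦ ?_) k
    simpa [height_flatMap_range hf, hu] using hfu m k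

end Telescoping

def labelsAt (D : List Bool) (h t : ℤ) : List Bool :=
  ((labelHeights D h).filter (fun p => p.2 = t)).map Prod.fst

lemma labelsAt_cons (b : Bool) (D : List Bool) (h t : ℤ) :
    labelsAt (b :: D) h t =
      if (if b then h + 1 else h - 1) = t then b :: labelsAt D (if b then h + 1 else h - 1) t
      else labelsAt D (if b then h + 1 else h - 1) t := by
  simp only [labelsAt, labelHeights, filter_cons, decide_eq_true_eq]
  split_ifs <;> rfl

lemma zeta_eq_flatMap (D : List Bool) :
    zeta D = (range (D.length + 1)).flatMap fun t : ℕ ↦ (labelsAt D 0 t).map not := by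
  simp [zeta, labelsAt, flatMap_assoc, Function.comp_def]

lemma exists_eq_height_take_of_mem_labelHeights {D : List Bool} {h : ℤ} {p : Bool × ℤ}
    (hp : p ∈ labelHeights D h) : ∃ k, p.2 = h + height (D.take k) := by
  induction D generalizing h with
  | nil => simp [labelHeights] at hp
  | cons b D ih =>
    simp only [labelHeights, mem_cons] at hp
    rcases hp with rfl | hp
    · exact ⟨1, by cases b <;> simp [height_cons, sub_eq_add_neg]⟩
    · obtain ⟨k, hk⟩ := ih hp
      exact ⟨k + 1, by rw [hk, take_succ_cons, height_cons]; split_ifs <;> ring⟩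

lemma labelsAt_eq_nil {D : List Bool} {h t : ℤ} (ht : ∀ k, h + height (D.take k) ≠ t) :
    labelsAt D h t = [] := by
  simp only [labelsAt, map_eq_nil_iff, filter_eq_nil_iff, decide_eq_true_eq]
  intro p hp
  obtain ⟨k, hk⟩ := exists_eq_height_take_of_mem_labelHeights hp
  exact hk ▸ ht k

lemma height_le_length (l : List Bool) : height l ≤ l.length := by
  have := l.count_true_add_count_false
  simp only [height]
  omega

lemma labelsAt_eq_nil_of_length_lt {D : List Bool} {h t : ℤ} (ht : h + D.length < t) :
    labelsAt D h t = [] :=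
  labelsAt_eq_nil fun k ↦ by
    have := height_le_length (D.take k)
    have : (D.take k).length ≤ D.length := length_take_le' k D
    omega

/-- Up-crossings of the line `y = x + t - 1/2` minus down-crossings of it telescope along `D`. -/
lemma count_true_labelsAt_sub_count_false_labelsAt (D : List Bool) (h t : ℤ) :
    ((labelsAt D h t).count true : ℤ) - (labelsAt D h (t - 1)).count false =
      (if t ≤ h + height D then 1 else 0) - (if t ≤ h then 1 else 0) := by
  induction D generalizing h with
  | nil => simp [labelsAt, labelHeights]
  | cons b D ih =>
    cases b
    · have := ih (h - 1)
      simp only [labelsAt_cons, height_cons, Bool.false_eq_true, if_false] at this ⊢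
      split_ifs at this ⊢ <;> simp at this ⊢ <;> omega
    · have := ih (h + 1)
      simp only [labelsAt_cons, height_cons, if_true] at this ⊢
      split_ifs at this ⊢ <;> simp at this ⊢ <;> omega

lemma count_true_labelsAt_add_one {D : List Bool} (hD : height D = 0) (t : ℤ) :
    (labelsAt D 0 (t + 1)).count true = (labelsAt D 0 t).count false := by
  have := count_true_labelsAt_sub_count_false_labelsAt D 0 (t + 1)
  simp only [hD, add_zero, add_sub_cancel_right, sub_self] at this
  omega

lemma count_true_labelsAt_zero {D : List Bool} (hD : ∀ k, 0 ≤ height (D.take k)) :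
    (labelsAt D 0 0).count true = 0 := by
  have := count_true_labelsAt_sub_count_false_labelsAt D 0 0
  have hnil : labelsAt D 0 (-1) = [] := labelsAt_eq_nil fun k ↦ by have := hD k; omega
  have hD0 := hD D.length
  rw [take_length] at hD0
  simpa [hnil, hD0] using this

lemma count_map_not (b : Bool) (l : List Bool) : (l.map not).count b = l.count (!b) := by
  simpa using count_map_of_injective l not Bool.not_injective (!b)

lemma height_map_not (l : List Bool) : height (l.map not) = -height l := by
  simp only [height, count_map_not, Bool.not_true, Bool.not_false]
  ring

end LatticePath

open List LatticePath in
/-- The zeta map sends Dyck paths to Dyck paths. -/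
theorem zeta_isDyck (D : List Bool) (h : IsDyck D) : IsDyck (zeta D) := by
  obtain ⟨hD, hpre⟩ := (isDyck_iff D).1 h
  set U : ℕ → ℤ := fun t ↦ (labelsAt D 0 t).count true with hU
  have hblock (t : ℕ) : height ((labelsAt D 0 t).map not) = U (t + 1) - U t := by
    rw [height_map_not]
    simp only [hU, height, Nat.cast_add, Nat.cast_one, count_true_labelsAt_add_one hD]
    ring
  have hbound (t k : ℕ) : 0 ≤ U t + height (((labelsAt D 0 t).map not).take k) := by
    have := neg_count_false_le_height_take ((labelsAt D 0 t).map not) k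
    rw [count_map_not, Bool.not_false] at this
    simp only [hU]
    omega
  have hU0 : U 0 = 0 := by simpa [hU] using count_true_labelsAt_zero hpre
  have hUn : U (D.length + 1) = 0 := by
    simp [hU, labelsAt_eq_nil_of_length_lt (D := D) (h := 0) (t := D.length + 1) (by simp)]
  rw [zeta_eq_flatMap, isDyck_iff, height_flatMap_range hblock, hUn, hU0]
  exact ⟨rfl, height_take_flatMap_range_nonneg hU0 hblock hbound _⟩
end

section
/- Within each strip between the lines y=x+t and y=x+t+1, a Dyck path has an equal number of up steps and right steps, alternating starting with an up step; moreover, matching the i-th up step with the i-th right step in each strip, the up step always precedes its matched right step. -/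
/-- The subsequence of steps of `D` lying in the strip between `y = x + t` and
`y = x + t + 1`: up steps whose label is at height `t + 1` and right steps
whose label is at height `t`. -/
def stripSeq (D : List Bool) (t : ℕ) : List Bool :=
  ((labelHeights D 0).filter fun p =>
    (p.1 = true ∧ p.2 = (t : ℤ) + 1) ∨ (p.1 = false ∧ p.2 = (t : ℤ))).map Prod.fst

/-- Generalized strip sequence, starting at height `h`. -/
def gstrip (L : List Bool) (h : ℤ) (t : ℕ) : List Bool :=
  ((labelHeights L h).filter fun p =>
    (p.1 = true ∧ p.2 = (t : ℤ) + 1) ∨ (p.1 = false ∧ p.2 = (t : ℤ))).map Prod.fst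

lemma gstrip_aux (t : ℕ) : ∀ (L : List Bool) (h : ℤ),
    h + (L.count true : ℤ) - (L.count false : ℤ) < (t : ℤ) + 1 →
    (h < (t : ℤ) + 1 → ∃ k, gstrip L h t = (List.replicate k [true, false]).flatten) ∧
    ((t : ℤ) + 1 ≤ h → ∃ k, gstrip L h t =
      false :: (List.replicate k [true, false]).flatten) := by
  intro L
  induction L with
  | nil =>
    intro h hend
    simp only [List.count_nil, Nat.cast_zero, add_zero, sub_zero] at hend
    refine ⟨fun _ => ⟨0, by simp [gstrip, labelHeights]⟩, fun hc => absurd hend (by omega)⟩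
  | cons b rest ih =>
    intro h hend
    simp only [List.count_cons] at hend
    cases b with
    | true =>
      have hend' : (h + 1) + (rest.count true : ℤ) - (rest.count false : ℤ) < (t : ℤ) + 1 := by
        simp at hend; omega
      have ih' := ih (h + 1) hend'
      have hg : gstrip (true :: rest) h t =
          (if h + 1 = (t : ℤ) + 1 then [true] else []) ++ gstrip rest (h + 1) t := by
        simp only [gstrip, labelHeights, List.filter_cons]
        by_cases hc : h + 1 = (t : ℤ) + 1 <;> simp [hc]
      constructor
      · intro hlt
        by_cases hc : h + 1 = (t : ℤ) + 1
        · obtain ⟨k, hk⟩ := ih'.2 (by omega)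
          refine ⟨k + 1, ?_⟩
          rw [hg, if_pos hc, hk]; simp [List.replicate_succ]
        · obtain ⟨k, hk⟩ := ih'.1 (by omega)
          exact ⟨k, by simp [hg, hc, hk]⟩
      · intro hge
        have hc : ¬ (h + 1 = (t : ℤ) + 1) := by omega
        obtain ⟨k, hk⟩ := ih'.2 (by omega)
        exact ⟨k, by simp [hg, hc, hk]⟩
    | false =>
      have hend' : (h - 1) + (rest.count true : ℤ) - (rest.count false : ℤ) < (t : ℤ) + 1 := by
        simp at hend; omega
      have ih' := ih (h - 1) hend'
      have hg : gstrip (false :: rest) h t =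
          (if h - 1 = (t : ℤ) then [false] else []) ++ gstrip rest (h - 1) t := by
        simp only [gstrip, labelHeights, List.filter_cons]
        by_cases hc : h - 1 = (t : ℤ) <;> simp [hc]
      constructor
      · intro hlt
        have hc : ¬ (h - 1 = (t : ℤ)) := by omega
        obtain ⟨k, hk⟩ := ih'.1 (by omega)
        exact ⟨k, by simp [hg, hc, hk]⟩
      · intro hge
        by_cases hc : h - 1 = (t : ℤ)
        · obtain ⟨k, hk⟩ := ih'.1 (by omega)
          refine ⟨k, ?_⟩
          rw [hg, if_pos hc, hk]; simp
        · obtain ⟨k, hk⟩ := ih'.2 (by omega)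
          exact ⟨k, by rw [hg, if_neg hc, hk]; simp⟩

/-- Within each strip between `y = x + t` and `y = x + t + 1`,
a Dyck path has equally many up and right steps, alternating starting with an
up step; in particular the `i`-th up step precedes the `i`-th right step. -/
theorem strip_alternates (D : List Bool) (h : IsDyck D) (t : ℕ) :
    ∃ k, stripSeq D t = (List.replicate k [true, false]).flatten := by
  have hend : (0 : ℤ) + (D.count true : ℤ) - (D.count false : ℤ) < (t : ℤ) + 1 := by
    rw [h.1]; omega
  have := (gstrip_aux t D 0 hend).1 (by positivity)
  exact this
end

section
/- If U' is obtained from a unit interval order U on {1,...,n} by adding a rightmost interval I_{n+1}, then the Dyck path a(U') is obtained from a(U) by adding a final peak at position (n−s, n+1), where s is the number of elements of U' incomparable to n+1. -/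
lemma Fin.mem_iff_sub_card_le_of_upClosed {N : ℕ} {S : Finset (Fin N)} {b : Fin N}
    (hS : ∀ k ∈ S, k < b) (hup : ∀ i ∈ S, ∀ k, i ≤ k → k < b → k ∈ S)
    {i : Fin N} (hi : i < b) : i ∈ S ↔ b.val - S.card ≤ i.val := by
  constructor
  · intro hiS
    have hsub : Finset.Ico i b ⊆ S := fun k hk => by
      rw [Finset.mem_Ico] at hk
      exact hup i hiS k hk.1 hk.2
    have := Finset.card_le_card hsub
    rw [Fin.card_Ico] at this
    omega
  · intro hle
    by_contra hiS
    have hsub : S ⊆ Finset.Ioo i b := fun k hk => by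
      refine Finset.mem_Ioo.mpr ⟨lt_of_not_ge fun hki => hiS ?_, hS k hk⟩
      exact hup k hk i hki hi
    have := Finset.card_le_card hsub
    rw [Fin.card_Ioo] at this
    have : i.val < b.val := hi
    omega

namespace IsUIO

variable {n : ℕ} {r : Fin (n + 1) → Fin (n + 1) → Prop}

lemma not_last_rel (h : IsUIO r) (i : Fin (n + 1)) : ¬ r (Fin.last n) i :=
  fun hr => (h.1 _ _ hr).not_ge (Fin.le_last i)

lemma not_rel_last_iff [DecidableRel r] (h : IsUIO r) {i : Fin (n + 1)}
    (hi : i < Fin.last n) :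
    ¬ r i (Fin.last n) ↔ n - (Finset.univ.filter (fun k : Fin (n + 1) =>
      k ≠ Fin.last n ∧ ¬ r k (Fin.last n) ∧ ¬ r (Fin.last n) k)).card ≤ i.val := by
  refine Iff.trans ?_
    ((Fin.mem_iff_sub_card_le_of_upClosed ?_ ?_ hi).trans (by rw [Fin.val_last]))
  · simp [hi.ne, h.not_last_rel]
  · intro k hk
    simp only [Finset.mem_filter, Finset.mem_univ, true_and] at hk
    exact lt_of_le_of_ne (Fin.le_last k) hk.1
  · intro k hk k' hkk' hk'
    simp only [Finset.mem_filter, Finset.mem_univ, true_and] at hk ⊢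
    exact ⟨hk'.ne, fun hr => hk.2.1 (h.2 _ _ hr k _ hkk' le_rfl), h.not_last_rel k'⟩

end IsUIO

theorem a_extend_general {n : ℕ} (r : Fin n → Fin n → Prop)
    (r' : Fin (n + 1) → Fin (n + 1) → Prop) [DecidableRel r']
    (h' : IsUIO r')
    (hres : ∀ i j : Fin n, r' i.castSucc j.castSucc ↔ r i j)
    (s : ℕ)
    (hs : s = (Finset.univ.filter (fun i : Fin (n + 1) =>
      i ≠ Fin.last n ∧ ¬ r' i (Fin.last n) ∧ ¬ r' (Fin.last n) i)).card) :
    ∀ i j : Fin (n + 1), (i < j ∧ ¬ r' i j) ↔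
      ((∃ i₀ j₀ : Fin n, i = i₀.castSucc ∧ j = j₀.castSucc ∧ i₀ < j₀ ∧ ¬ r i₀ j₀) ∨
        (j = Fin.last n ∧ i ≠ j ∧ n - s ≤ i.val)) := by
  subst hs
  intro i j
  induction j using Fin.lastCases with
  | last =>
    have hnot : ¬ ∃ i₀ j₀ : Fin n,
        i = i₀.castSucc ∧ Fin.last n = j₀.castSucc ∧ i₀ < j₀ ∧ ¬ r i₀ j₀ :=
      fun ⟨_, j₀, _, hj, _⟩ => Fin.castSucc_ne_last j₀ hj.symm
    rw [or_iff_right hnot, ← Fin.lt_last_iff_ne_last, and_iff_right rfl]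
    exact and_congr_right h'.not_rel_last_iff
  | cast j₀ =>
    induction i using Fin.lastCases with
    | last => simp [(Fin.castSucc_lt_last j₀).not_gt, eq_comm, Fin.castSucc_ne_last]
    | cast i₀ => simp [hres, (Fin.castSucc_lt_last j₀).ne]

/-- If `U'` is obtained from a unit interval order `U` on
`{1,…,n}` by adding a rightmost interval `I_{n+1}`, then the Dyck path `a(U')`
is obtained from `a(U)` by adding a final peak at position `(n − s, n + 1)`,
where `s` is the number of elements of `U'` incomparable to `n + 1`: the area
set of `a(U')` consists of the boxes of `a(U)` together with the new boxes
`(i, n + 1)` for the last `s` values of `i`. -/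
theorem a_extend {n : ℕ} (r : Fin n → Fin n → Prop)
    (r' : Fin (n + 1) → Fin (n + 1) → Prop) [DecidableRel r']
    (h : IsUIO r) (h' : IsUIO r')
    (hres : ∀ i j : Fin n, r' i.castSucc j.castSucc ↔ r i j)
    (s : ℕ)
    (hs : s = (Finset.univ.filter (fun i : Fin (n + 1) =>
      i ≠ Fin.last n ∧ ¬ r' i (Fin.last n) ∧ ¬ r' (Fin.last n) i)).card) :
    ∀ i j : Fin (n + 1), (i < j ∧ ¬ r' i j) ↔
      ((∃ i₀ j₀ : Fin n, i = i₀.castSucc ∧ j = j₀.castSucc ∧ i₀ < j₀ ∧ ¬ r i₀ j₀) ∨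
        (j = Fin.last n ∧ i ≠ j ∧ n - s ≤ i.val)) :=
  a_extend_general r r' h' hres s hs
end

section
/- Swapping two adjacent entries a_{i−1}, a_i of a part listing with a_i > a_{i−1}+1 produces a part listing whose associated poset P is isomorphic to the original; and if a_1 > 0, removing a_1 and appending a_1−1 at the end also yields an isomorphic poset. -/
/-- Swapping two adjacent entries `a i, a (i+1)` of a part
listing with `a (i+1) > a i + 1` yields a part listing with isomorphic poset;
and if `a 1 > 0`, removing the first entry `a 1` and appending `a 1 − 1` at the
end also yields an isomorphic poset. -/
theorem swap_and_rotate_iso {n : ℕ} (a : Fin n → ℕ) :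
    (∀ i : Fin n, ∀ hi : i.val + 1 < n, a i + 1 < a ⟨i.val + 1, hi⟩ →
      ∃ e : Fin n ≃ Fin n, ∀ p q : Fin n,
        Prel (a ∘ Equiv.swap i ⟨i.val + 1, hi⟩) p q ↔ Prel a (e p) (e q)) ∧
    (∀ h0 : 0 < n, 0 < a ⟨0, h0⟩ →
      ∃ e : Fin n ≃ Fin n, ∀ p q : Fin n,
        Prel (fun k : Fin n =>
          if hk : k.val + 1 < n then a ⟨k.val + 1, hk⟩ else a ⟨0, h0⟩ - 1) p q ↔
        Prel a (e p) (e q)) := by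
  constructor
  · intro i hi hlt
    set j : Fin n := ⟨i.val + 1, hi⟩ with hj
    have hjv : j.val = i.val + 1 := rfl
    refine ⟨Equiv.swap i j, fun p q => ?_⟩
    have key : a (Equiv.swap i j q) = a (Equiv.swap i j p) + 1 →
        (p < q ↔ Equiv.swap i j p < Equiv.swap i j q) := by
      intro h
      rcases eq_or_ne p i with hpi | hpi
      · rw [hpi] at h ⊢
        rw [Equiv.swap_apply_left] at h ⊢
        rcases eq_or_ne q i with hqi | hqi
        · rw [hqi] at h ⊢
          rw [Equiv.swap_apply_left] at h ⊢
          simp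
        rcases eq_or_ne q j with hqj | hqj
        · rw [hqj] at h ⊢
          rw [Equiv.swap_apply_right] at h ⊢
          omega
        · rw [Equiv.swap_apply_of_ne_of_ne hqi hqj] at h ⊢
          have h2 : q.val ≠ i.val + 1 := fun hh => hqj (Fin.ext (hh.trans hjv.symm))
          omega
      rcases eq_or_ne p j with hpj | hpj
      · rw [hpj] at h ⊢
        rw [Equiv.swap_apply_right] at h ⊢
        rcases eq_or_ne q i with hqi | hqi
        · rw [hqi] at h ⊢
          rw [Equiv.swap_apply_left] at h ⊢
          omega
        rcases eq_or_ne q j with hqj | hqj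
        · rw [hqj] at h ⊢
          rw [Equiv.swap_apply_right] at h ⊢
          simp
        · rw [Equiv.swap_apply_of_ne_of_ne hqi hqj] at h ⊢
          have h1 : q.val ≠ i.val := fun hh => hqi (Fin.ext hh)
          have h2 : q.val ≠ i.val + 1 := fun hh => hqj (Fin.ext (hh.trans hjv.symm))
          omega
      · rw [Equiv.swap_apply_of_ne_of_ne hpi hpj] at h ⊢
        have h1 : p.val ≠ i.val := fun hh => hpi (Fin.ext hh)
        have h2 : p.val ≠ i.val + 1 := fun hh => hpj (Fin.ext (hh.trans hjv.symm))
        rcases eq_or_ne q i with hqi | hqi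
        · rw [hqi] at h ⊢
          rw [Equiv.swap_apply_left] at h ⊢
          omega
        rcases eq_or_ne q j with hqj | hqj
        · rw [hqj] at h ⊢
          rw [Equiv.swap_apply_right] at h ⊢
          omega
        · rw [Equiv.swap_apply_of_ne_of_ne hqi hqj]
    simp only [Prel, Function.comp_apply]
    tauto
  · intro h0 ha0
    obtain ⟨m, rfl⟩ := Nat.exists_eq_succ_of_ne_zero (Nat.pos_iff_ne_zero.mp h0)
    refine ⟨finRotate (m + 1), fun p q => ?_⟩
    have h00 : (⟨0, h0⟩ : Fin (m + 1)) = 0 := rfl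
    rw [h00] at ha0
    simp only [Prel, finRotate_succ_apply, h00]
    by_cases hp : p.val + 1 < m + 1
    · have hp' : (p + 1) = (⟨p.val + 1, hp⟩ : Fin (m + 1)) :=
        Fin.ext (Fin.val_add_one_of_lt (by rw [Fin.lt_iff_val_lt_val, Fin.val_last]; omega))
      by_cases hq : q.val + 1 < m + 1
      · have hq' : (q + 1) = (⟨q.val + 1, hq⟩ : Fin (m + 1)) :=
          Fin.ext (Fin.val_add_one_of_lt (by rw [Fin.lt_iff_val_lt_val, Fin.val_last]; omega))
        rw [dif_pos hp, dif_pos hq, hp', hq']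
        simp only [Fin.lt_def]
        omega
      · have hq' : (q + 1) = (0 : Fin (m + 1)) := by
          have hql : q = Fin.last m := Fin.ext (by rw [Fin.val_last]; omega)
          rw [hql, Fin.last_add_one]
        rw [dif_neg hq, dif_pos hp, hp', hq']
        simp only [Fin.lt_def, Fin.val_zero]
        omega
    · have hp' : (p + 1) = (0 : Fin (m + 1)) := by
        have hpl : p = Fin.last m := Fin.ext (by rw [Fin.val_last]; omega)
        rw [hpl, Fin.last_add_one]
      by_cases hq : q.val + 1 < m + 1
      · have hq' : (q + 1) = (⟨q.val + 1, hq⟩ : Fin (m + 1)) :=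
          Fin.ext (Fin.val_add_one_of_lt (by rw [Fin.lt_iff_val_lt_val, Fin.val_last]; omega))
        rw [dif_pos hq, dif_neg hp, hp', hq']
        simp only [Fin.lt_def, Fin.val_zero]
        omega
      · rw [dif_neg hp, dif_neg hq]
        have hpq : p = q := Fin.ext (by omega)
        subst hpq
        simp only [Fin.lt_def]
        omega
end
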